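/- arXiv:1108.5044 — 3 statements merged into one kernel-verified Lean document; each statement's English description precedes it below -/
import Mathlib

section
/- For positive integers n and k with 1 ≤ k ≤ n, the identity C(n+1, k-j) · j = k · C(n, k-j) − (n-k+1) · C(n, k-j-1) holds for all integers j with 0 ≤ j ≤ k. -/
/-! Writing `b = k - j`, the identity is a linear combination of Pascal's rule
`C(n+1, b) = C(n, b) + C(n, b-1)` and the absorption identity `b·C(n, b) = (n-b+1)·C(n, b-1)`,
both of which hold for every integer `b`. -/

/-- Binomial coefficient with integer lower index, with the convention that it
vanishes when the lower index is negative. -/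
def intChoose (a : ℕ) (b : ℤ) : ℤ := if 0 ≤ b then (a.choose b.toNat : ℤ) else 0

theorem intChoose_natCast (a m : ℕ) : intChoose a m = a.choose m := by
  simp [intChoose]

theorem intChoose_of_neg (a : ℕ) {b : ℤ} (hb : b < 0) : intChoose a b = 0 :=
  if_neg (not_le.mpr hb)

theorem intChoose_neg_one (a : ℕ) : intChoose a (-1) = 0 :=
  intChoose_of_neg a (by norm_num)

theorem neg_or_exists_natCast_eq (b : ℤ) : b < 0 ∨ ∃ m : ℕ, b = m := by
  rcases lt_or_ge b 0 with hb | hb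
  · exact .inl hb
  · exact .inr ⟨b.toNat, (Int.toNat_of_nonneg hb).symm⟩

theorem intChoose_succ_left (n : ℕ) (b : ℤ) :
    intChoose (n + 1) b = intChoose n b + intChoose n (b - 1) := by
  obtain hb | ⟨m, rfl⟩ := neg_or_exists_natCast_eq b
  · simp [intChoose_of_neg _ hb, intChoose_of_neg _ (by omega : b - 1 < 0)]
  cases m with
  | zero => simp [intChoose]
  | succ s =>
    rw [Nat.cast_succ, add_sub_cancel_right]
    simp only [← Nat.cast_succ, intChoose_natCast, Nat.choose_succ_succ']
    push_cast
    ring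

theorem natCast_choose_succ_mul (n s : ℕ) :
    (n.choose (s + 1) : ℤ) * (s + 1) = n.choose s * (n - s) := by
  rcases le_or_gt s n with hsn | hns
  · have h := congrArg (Nat.cast : ℕ → ℤ) (Nat.choose_succ_right_eq n s)
    push_cast [Nat.cast_sub hsn] at h
    exact h
  · simp [Nat.choose_eq_zero_of_lt hns, Nat.choose_eq_zero_of_lt (hns.trans (Nat.lt_succ_self s))]

theorem mul_intChoose (n : ℕ) (b : ℤ) :
    b * intChoose n b = (n - b + 1) * intChoose n (b - 1) := by
  obtain hb | ⟨m, rfl⟩ := neg_or_exists_natCast_eq b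
  · simp [intChoose_of_neg _ hb, intChoose_of_neg _ (by omega : b - 1 < 0)]
  cases m with
  | zero => simp [intChoose_neg_one]
  | succ s =>
    rw [Nat.cast_succ, add_sub_cancel_right]
    simp only [← Nat.cast_succ, intChoose_natCast]
    push_cast
    linear_combination natCast_choose_succ_mul n s

theorem branching_binomial_identity_general (n k : ℕ)
    (j : ℤ) :
    intChoose (n + 1) ((k : ℤ) - j) * j
      = (k : ℤ) * intChoose n ((k : ℤ) - j)
        - ((n : ℤ) - k + 1) * intChoose n ((k : ℤ) - j - 1) := by
  rw [intChoose_succ_left]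
  linear_combination (-1 : ℤ) * mul_intChoose n ((k : ℤ) - j)

/-- For `1 ≤ k ≤ n` and `0 ≤ j ≤ k`,
`C(n+1, k-j)·j = k·C(n, k-j) − (n-k+1)·C(n, k-j-1)`. -/
theorem branching_binomial_identity (n k : ℕ) (hk : 1 ≤ k) (hkn : k ≤ n)
    (j : ℤ) (hj0 : 0 ≤ j) (hjk : j ≤ (k : ℤ)) :
    intChoose (n + 1) ((k : ℤ) - j) * j
      = (k : ℤ) * intChoose n ((k : ℤ) - j)
        - ((n : ℤ) - k + 1) * intChoose n ((k : ℤ) - j - 1) :=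
  branching_binomial_identity_general n k j
end

section
/- Define the block functions τ_k^n on the symmetric group S_n by τ_k^n(g) = ∑_{j=0}^{k-1} (-1)^j · C(n+1, j) · (k-j)^{ℓ(g)}, where ℓ(g) is the number of cycles of g. Then for all 1 ≤ k ≤ n and all g ∈ S_n, k^{ℓ(g)} = ∑_{j=0}^{k-1} C(n+j, j) · τ_{k-j}^n(g). -/
/-- The number of cycles of a permutation of `Fin n` (fixed points counted as cycles). -/
noncomputable def cycleCount {n : ℕ} (g : Equiv.Perm (Fin n)) : ℕ :=
  Nat.card (MulAction.orbitRel.Quotient (Subgroup.zpowers g) (Fin n))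

/-- The block function `τ_k^n(g) = ∑_{j=0}^{k-1} (-1)^j C(n+1, j) (k-j)^{ℓ(g)}`. -/
noncomputable def tau (n k : ℕ) {m : ℕ} (g : Equiv.Perm (Fin m)) : ℤ :=
  ∑ j ∈ Finset.range k, (-1 : ℤ) ^ j * ((n + 1).choose j) * ((k - j : ℕ) : ℤ) ^ cycleCount g

/-!
The coefficients `(-1)^j C(n+1, j)` and `C(n+j, j)` are those of `(1 - X)^(n+1)` and of its inverse
`1 / (1 - X)^(n+1)`, so the two triangular transforms they define are mutually inverse. Nothing
about permutations enters: the identity holds with `ℓ(g)` replaced by any exponent.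
-/

open Finset PowerSeries

theorem sum_mul_sum_range_sub_eq_of_mk_mul_mk_eq_one {R : Type*} [CommSemiring R] {a b : ℕ → R}
    (hab : mk a * mk b = 1) (f : ℕ → R) {k : ℕ} (hk : k ≠ 0) :
    ∑ j ∈ range k, b j * ∑ i ∈ range (k - j), a i * f (k - j - i) = f k := by
  have hconv (s : ℕ) : ∑ t ∈ range (s + 1), b t * a (s - t) = if s = 0 then 1 else 0 := by
    have := congrArg (coeff s) hab
    rw [mul_comm, coeff_mul, coeff_one,
      Nat.sum_antidiagonal_eq_sum_range_succ fun i j => coeff i (mk b) * coeff j (mk a)] at this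
    simpa only [coeff_mk] using this
  calc ∑ j ∈ range k, b j * ∑ i ∈ range (k - j), a i * f (k - j - i)
      = ∑ s ∈ range k, ∑ t ∈ range (s + 1), b t * (a (s - t) * f (k - t - (s - t))) := by
        simp_rw [mul_sum]
        exact (sum_range_diag_flip k fun j i => b j * (a i * f (k - j - i))).symm
    _ = ∑ s ∈ range k, (∑ t ∈ range (s + 1), b t * a (s - t)) * f (k - s) := by
        refine sum_congr rfl fun s hs => ?_
        rw [sum_mul]
        refine sum_congr rfl fun t ht => ?_
        rw [mem_range] at hs ht
        rw [show k - t - (s - t) = k - s by omega, mul_assoc]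
    _ = f k := by
        simp_rw [hconv, ite_mul, one_mul, zero_mul, sum_ite_eq', mem_range, Nat.pos_of_ne_zero hk,
          if_true, Nat.sub_zero]

theorem mk_neg_one_pow_mul_choose {R : Type*} [CommRing R] (d : ℕ) :
    (mk fun i => (-1) ^ i * (d.choose i : R)) = (1 - X) ^ d := by
  ext i
  rw [coeff_mk, show (1 - X : R⟦X⟧) = rescale (-1) (1 + X) by simp [sub_eq_add_neg], ← map_pow,
    coeff_rescale, show (1 + X : R⟦X⟧) ^ d = (((1 + Polynomial.X) ^ d : Polynomial R) : R⟦X⟧) by simp,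
    Polynomial.coeff_coe, Polynomial.coeff_one_add_X_pow]

theorem sigma_eq_sum_tau_general (n k : ℕ) (hk : 1 ≤ k) (g : Equiv.Perm (Fin n)) :
    (k : ℤ) ^ cycleCount g
      = ∑ j ∈ Finset.range k, ((n + j).choose j : ℤ) * tau n (k - j) g := by
  have hinv : (mk fun i => (-1) ^ i * ((n + 1).choose i : ℤ)) *
      mk (fun j => ((n + j).choose j : ℤ)) = 1 := by
    rw [mk_neg_one_pow_mul_choose, mul_comm]
    convert mk_add_choose_mul_one_sub_pow_eq_one ℤ n using 4
    exact_mod_cast Nat.choose_symm_add.symm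
  exact (sum_mul_sum_range_sub_eq_of_mk_mul_mk_eq_one hinv (fun m => (m : ℤ) ^ cycleCount g)
    (by omega)).symm

/-- Inversion formula: `k^{ℓ(g)} = ∑_{j=0}^{k-1} C(n+j, j) τ_{k-j}^n(g)`. -/
theorem sigma_eq_sum_tau (n k : ℕ) (hk : 1 ≤ k) (hkn : k ≤ n) (g : Equiv.Perm (Fin n)) :
    (k : ℤ) ^ cycleCount g
      = ∑ j ∈ Finset.range k, ((n + j).choose j : ℤ) * tau n (k - j) g :=
  sigma_eq_sum_tau_general n k hk g
end

section
/- The Worpitzky-type identity holds: for all positive integers n and k, k^n = ∑_{j=0}^{k-1} C(n+j, n) · A(n, k−j), where A(n,i) is the Eulerian number counting permutations of {1,...,n} with i−1 descents. -/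
/-! Sorting a word `f : Fin n → Fin k` stably splits `Fin k ^ Fin n` into fibres indexed by
permutations `σ`. The sorted word `f ∘ σ` is weakly increasing and must increase strictly exactly
at the descents of `σ`; adding to its `i`-th letter the number of non-descents before `i` turns
such words bijectively into strictly increasing words in `Fin (k + n - 1 - des σ)`, so the fibre
has `C(k + n - 1 - des σ, n)` elements. Grouping the permutations by their number of descents
and setting `j = k - 1 - des σ` gives Worpitzky's identity. -/

/-- The number of descents of a permutation of `Fin n` in one-line notation:
positions `j` (0-indexed, `j + 1 < n`) with `g(j+1) < g(j)`. -/
noncomputable def permDescents (n : ℕ) (g : Equiv.Perm (Fin n)) : ℕ :=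
  Nat.card {j : ℕ // ∃ h : j + 1 < n, g ⟨j + 1, h⟩ < g ⟨j, Nat.lt_of_succ_lt h⟩}

/-- The Eulerian number `A(n,k)`: the number of permutations of `{1, …, n}` with
exactly `k − 1` descents. -/
noncomputable def eulerian (n k : ℕ) : ℕ :=
  Nat.card {g : Equiv.Perm (Fin n) // permDescents n g = k - 1}

open Finset

def sortFiberEquiv {α : Type*} [LinearOrder α] {n : ℕ} (σ : Equiv.Perm (Fin n)) :
    {f : Fin n → α // Tuple.sort f = σ} ≃
      {g : Fin n → α // StrictMono fun i => toLex (g i, σ i)} :=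
  (σ.symm.arrowCongr (.refl α)).subtypeEquiv fun f => by
    rw [eq_comm, Tuple.eq_sort_iff']
    rfl

variable {m k : ℕ}

def MonotoneStrictAt {α : Type*} [Preorder α] (s : Finset (Fin m)) (g : Fin (m + 1) → α) :
    Prop :=
  ∀ i, if i ∈ s then g i.castSucc < g i.succ else g i.castSucc ≤ g i.succ

lemma MonotoneStrictAt.monotone {α : Type*} [Preorder α] {s : Finset (Fin m)}
    {g : Fin (m + 1) → α} (hg : MonotoneStrictAt s g) : Monotone g := by
  refine Fin.monotone_iff_le_succ.2 fun i => ?_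
  have := hg i
  split_ifs at this
  exacts [this.le, this]

namespace Equiv.Perm

def descents (σ : Equiv.Perm (Fin (m + 1))) : Finset (Fin m) := {i | σ i.succ < σ i.castSucc}

lemma permDescents_eq_card_descents (σ : Equiv.Perm (Fin (m + 1))) :
    permDescents (m + 1) σ = #σ.descents := by
  rw [descents, ← Fintype.card_subtype, ← Nat.card_eq_fintype_card]
  exact Nat.card_congr
    { toFun := fun j => ⟨⟨j.1, Nat.lt_of_succ_lt_succ j.2.fst⟩, j.2.snd⟩
      invFun := fun i => ⟨i.1.1, Nat.succ_lt_succ i.1.2, i.2⟩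
      left_inv := fun _ => rfl
      right_inv := fun _ => rfl }

lemma strictMono_toLex_iff {α : Type*} [LinearOrder α] (g : Fin (m + 1) → α)
    (σ : Equiv.Perm (Fin (m + 1))) :
    StrictMono (fun i => toLex (g i, σ i)) ↔ MonotoneStrictAt σ.descents g := by
  rw [Fin.strictMono_iff_lt_succ]
  refine forall_congr' fun i => ?_
  simp only [Prod.Lex.toLex_lt_toLex, descents, mem_filter, mem_univ, true_and]
  split_ifs with h
  · simp [h.not_gt]
  · have hne : σ i.castSucc ≠ σ i.succ := σ.injective.ne Fin.castSucc_lt_succ.ne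
    simp [lt_of_le_of_ne (not_lt.1 h) hne, le_iff_lt_or_eq]

end Equiv.Perm

open Equiv.Perm

lemma eulerian_succ_eq_card (d : ℕ) :
    eulerian (m + 1) (d + 1) = #{σ : Equiv.Perm (Fin (m + 1)) | #σ.descents = d} := by
  simp only [eulerian, permDescents_eq_card_descents, Nat.add_sub_cancel]
  rw [Nat.card_eq_fintype_card, Fintype.card_subtype]

section WeakSteps

variable (s : Finset (Fin m))

def weakStepsBelow (i : Fin (m + 1)) : ℕ := #{j | j ∉ s ∧ j.castSucc < i}

lemma weakStepsBelow_succ (i : Fin m) :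
    weakStepsBelow s i.succ = weakStepsBelow s i.castSucc + if i ∈ s then 0 else 1 := by
  have hsplit : ({j | j ∉ s ∧ j.castSucc < i.succ} : Finset (Fin m)) =
      ({j | j ∉ s ∧ j.castSucc < i.castSucc} : Finset (Fin m)) ∪
        ({j | j ∉ s ∧ j = i} : Finset (Fin m)) := by
    ext j
    simp only [mem_union, mem_filter, mem_univ, true_and, Fin.castSucc_lt_succ_iff,
      Fin.castSucc_lt_castSucc_iff, le_iff_lt_or_eq]
    tauto
  have hdisj : Disjoint ({j | j ∉ s ∧ j.castSucc < i.castSucc} : Finset (Fin m))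
      ({j | j ∉ s ∧ j = i} : Finset (Fin m)) :=
    disjoint_filter.2 fun j _ hlt heq => (Fin.castSucc_lt_castSucc_iff.1 hlt.2).ne heq.2
  have hi : #({j | j ∉ s ∧ j = i} : Finset (Fin m)) = if i ∈ s then 0 else 1 := by
    rw [← filter_filter, filter_eq']
    split_ifs <;> simp_all
  rw [weakStepsBelow, weakStepsBelow, hsplit, card_union_of_disjoint hdisj, hi]

lemma card_compl_fin : #sᶜ = m - #s := by
  rw [card_compl, Fintype.card_fin]

lemma weakStepsBelow_le (i : Fin (m + 1)) : weakStepsBelow s i ≤ m - #s :=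
  card_compl_fin s ▸ card_le_card fun j hj => by simp_all

lemma weakStepsBelow_last : weakStepsBelow s (Fin.last m) = m - #s := by
  rw [← card_compl_fin, weakStepsBelow]
  congr 1
  ext j
  simp [Fin.castSucc_lt_last]

lemma monotoneStrictAt_iff_strictMono_add (g : Fin (m + 1) → ℕ) :
    MonotoneStrictAt s g ↔ StrictMono fun i => g i + weakStepsBelow s i := by
  rw [Fin.strictMono_iff_lt_succ]
  refine forall_congr' fun i => ?_
  rw [weakStepsBelow_succ]
  split_ifs <;> omega

lemma weakStepsBelow_le_of_strictMono {G : Fin (m + 1) → ℕ} (hG : StrictMono G)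
    (i : Fin (m + 1)) : weakStepsBelow s i ≤ G i := by
  induction i using Fin.induction with
  | zero => simp [weakStepsBelow]
  | succ i ih =>
    have := hG (Fin.castSucc_lt_succ (i := i))
    rw [weakStepsBelow_succ]
    split_ifs <;> omega

def monotoneStrictAtEquiv :
    {g : Fin (m + 1) → Fin k // MonotoneStrictAt s g} ≃
      {G : Fin (m + 1) → Fin (k + (m - #s)) // StrictMono G} where
  toFun g := ⟨fun i => ⟨g.1 i + weakStepsBelow s i, by
      have := weakStepsBelow_le s i; have := (g.1 i).isLt; omega⟩,
    (monotoneStrictAt_iff_strictMono_add s fun i => (g.1 i : ℕ)).1 g.2⟩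
  invFun G :=
    have hG : MonotoneStrictAt s fun i => (G.1 i : ℕ) - weakStepsBelow s i := by
      rw [monotoneStrictAt_iff_strictMono_add]
      simp only [Nat.sub_add_cancel (weakStepsBelow_le_of_strictMono s G.2 _)]
      exact G.2
    ⟨fun i => ⟨G.1 i - weakStepsBelow s i, by
      have := hG.monotone (Fin.le_last i)
      have := weakStepsBelow_le_of_strictMono s G.2 (Fin.last m)
      have := (G.1 (Fin.last m)).isLt
      rw [weakStepsBelow_last] at *
      omega⟩, hG⟩
  left_inv g := by ext; simp
  right_inv G := by ext; simp [Nat.sub_add_cancel (weakStepsBelow_le_of_strictMono s G.2 _)]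

end WeakSteps

lemma card_strictMono_fin (n N : ℕ) :
    Nat.card {G : Fin n → Fin N // StrictMono G} = N.choose n :=
  calc Nat.card {G : Fin n → Fin N // StrictMono G}
    _ = Nat.card (Fin n ↪o Fin N) := Nat.card_congr
          { toFun := fun G => OrderEmbedding.ofStrictMono G.1 G.2
            invFun := fun f => ⟨f, f.strictMono⟩
            left_inv := fun _ => rfl
            right_inv := fun _ => rfl }
    _ = Nat.card (Set.powersetCard (Fin N) n) := Nat.card_congr Set.powersetCard.ofFinEmbEquiv
    _ = N.choose n := by rw [Set.powersetCard.card, Nat.card_fin]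

lemma card_monotoneStrictAt (s : Finset (Fin m)) :
    Nat.card {g : Fin (m + 1) → Fin k // MonotoneStrictAt s g} = (k + m - #s).choose (m + 1) := by
  rw [Nat.card_congr (monotoneStrictAtEquiv s), card_strictMono_fin,
    Nat.add_sub_assoc (by simpa using card_le_univ s)]

lemma card_sort_eq (σ : Equiv.Perm (Fin (m + 1))) :
    Nat.card {f : Fin (m + 1) → Fin k // Tuple.sort f = σ} =
      (k + m - #σ.descents).choose (m + 1) := by
  rw [Nat.card_congr ((sortFiberEquiv σ).trans
    (.subtypeEquivRight fun g => strictMono_toLex_iff g σ)), card_monotoneStrictAt]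

lemma pow_eq_sum_choose_descents :
    k ^ (m + 1) = ∑ σ : Equiv.Perm (Fin (m + 1)), (k + m - #σ.descents).choose (m + 1) :=
  calc k ^ (m + 1)
    _ = Nat.card (Fin (m + 1) → Fin k) := by simp
    _ = ∑ σ, Nat.card {f : Fin (m + 1) → Fin k // Tuple.sort f = σ} := by
        rw [← Nat.card_sigma, Nat.card_congr (Equiv.sigmaFiberEquiv _)]
    _ = _ := sum_congr rfl fun σ _ => card_sort_eq σ

lemma sum_perm_descents_eq_sum_eulerian {M : Type*} [AddCommMonoid M] (f : ℕ → M)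
    (hf : ∀ d, k ≤ d → f d = 0) :
    ∑ σ : Equiv.Perm (Fin (m + 1)), f #σ.descents =
      ∑ d ∈ range k, eulerian (m + 1) (d + 1) • f d := by
  calc ∑ σ : Equiv.Perm (Fin (m + 1)), f #σ.descents
    _ = ∑ σ : Equiv.Perm (Fin (m + 1)) with #σ.descents ∈ range k, f #σ.descents :=
        (sum_filter_of_ne fun σ _ h => mem_range.2 (not_le.1 fun hk => h (hf _ hk))).symm
    _ = ∑ d ∈ range k, ∑ σ : Equiv.Perm (Fin (m + 1)) with #σ.descents = d, f d :=
        (sum_fiberwise_eq_sum_filter' _ _ _ _).symm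
    _ = ∑ d ∈ range k, eulerian (m + 1) (d + 1) • f d := by
        simp only [sum_const, eulerian_succ_eq_card]

theorem worpitzky_general (n k : ℕ) (hn : 0 < n) :
    k ^ n = ∑ j ∈ Finset.range k, (n + j).choose n * eulerian n (k - j) := by
  obtain ⟨m, rfl⟩ := Nat.exists_eq_add_one_of_ne_zero hn.ne'
  have hvanish : ∀ d, k ≤ d → (k + m - d).choose (m + 1) = 0 :=
    fun d hd => Nat.choose_eq_zero_of_lt (by omega)
  rw [pow_eq_sum_choose_descents, sum_perm_descents_eq_sum_eulerian _ hvanish,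
    ← sum_range_reflect]
  refine sum_congr rfl fun d hd => ?_
  have hd : d < k := mem_range.1 hd
  rw [smul_eq_mul, mul_comm, show k + m - (k - 1 - d) = m + 1 + d by omega,
    show k - 1 - d + 1 = k - d by omega]

/-- The Worpitzky-type identity: `k^n = ∑_{j=0}^{k-1} C(n+j, n) · A(n, k−j)`. -/
theorem worpitzky (n k : ℕ) (hn : 0 < n) (hk : 0 < k) :
    k ^ n = ∑ j ∈ Finset.range k, (n + j).choose n * eulerian n (k - j) :=
  worpitzky_general n k hn
end
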